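/- Let $f_1,\dots,f_n : \mathbb{R}^d \to \mathbb{R}$ be $\mu$-strongly convex and $L$-smooth. Fix a permutation $\pi$ of $\{1,\dots,n\}$, stepsize $0 < \gamma \le 1/L$, and define within an epoch $x^{i+1} = x^i - \gamma\nabla f_{\pi_i}(x^i)$ and $x_\ast^i = x_\ast - \gamma\sum_{j=0}^{i-1}\nabla f_{\pi_j}(x_\ast)$ where $x_\ast$ minimizes $f = \frac{1}{n}\sum_i f_i$. Then for each $i$: $\|x^{i+1} - x_\ast^{i+1}\|^2 \le (1-\gamma\mu)\|x^i - x_\ast^i\|^2 + 2\gamma D_{f_{\pi_i}}(x_\ast^i, x_\ast)$. -/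

import Mathlib

/-!
Write `D_f(x, y) = f x - f y - ⟪∇f y, x - y⟫` for the Bregman divergence. One step of the
iteration compares the gradient step `a - γ∇f(a)` with the shadow step `b - γ∇f(c)`. Expanding
the square leaves the cross term `⟪∇f a - ∇f c, a - b⟫`, which the three-point identity rewrites as
`D_f(b, a) + D_f(a, c) - D_f(b, c)`. Strong convexity bounds `D_f(b, a)` below by `μ/2 ‖a - b‖²`,
and cocoercivity `‖∇f a - ∇f c‖² ≤ 2L D_f(a, c)` together with `γ ≤ 1/L` lets the `-2γ D_f(a, c)`
absorb the quadratic term `γ²‖∇f a - ∇f c‖²`; only `2γ D_f(b, c)` is left.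
-/

open scoped Gradient RealInnerProductSpace

variable {F : Type*} [NormedAddCommGroup F] [InnerProductSpace ℝ F] [CompleteSpace F]

noncomputable def bregmanDiv (f : F → ℝ) (x y : F) : ℝ :=
  f x - f y - ⟪∇ f y, x - y⟫

theorem inner_gradient_sub_gradient_eq_bregmanDiv (f : F → ℝ) (a b c : F) :
    ⟪∇ f a - ∇ f c, a - b⟫ = bregmanDiv f b a + bregmanDiv f a c - bregmanDiv f b c := by
  simp only [bregmanDiv, inner_sub_left, inner_sub_right]
  ring

theorem hasDerivAt_comp_add_smul {f : F → ℝ} (hd : Differentiable ℝ f) (x v : F) (t : ℝ) :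
    HasDerivAt (fun t : ℝ => f (x + t • v)) ⟪∇ f (x + t • v), v⟫ t := by
  have hline : HasDerivAt (fun t : ℝ => x + t • v) v t := by
    simpa using ((hasDerivAt_id t).smul_const v).const_add x
  simpa [Function.comp_def] using
    (hasGradientAt_iff_hasFDerivAt.mp (hd (x + t • v)).hasGradientAt).comp_hasDerivAt t hline

variable {f : F → ℝ} {L : ℝ}

theorem bregmanDiv_le_of_lipschitz_gradient (hd : Differentiable ℝ f)
    (hsm : ∀ x y, ‖∇ f x - ∇ f y‖ ≤ L * ‖x - y‖) (x y : F) :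
    bregmanDiv f y x ≤ L / 2 * ‖y - x‖ ^ 2 := by
  set v := y - x
  -- `g 0 - g 1` is the claimed gap, and `g' t = ⟪∇f(x + tv) - ∇f x, v⟫ - L t ‖v‖² ≤ 0`.
  set g : ℝ → ℝ := fun t => f (x + t • v) - t * ⟪∇ f x, v⟫ - L * t ^ 2 / 2 * ‖v‖ ^ 2
  have hg : ∀ t : ℝ, HasDerivAt g (⟪∇ f (x + t • v), v⟫ - ⟪∇ f x, v⟫ - L * t * ‖v‖ ^ 2) t := by
    intro t
    have hquad : HasDerivAt (fun t : ℝ => L * t ^ 2 / 2 * ‖v‖ ^ 2) (L * t * ‖v‖ ^ 2) t := by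
      exact ((((hasDerivAt_pow 2 t).const_mul L).div_const 2).mul_const (‖v‖ ^ 2)).congr_deriv
        (by ring)
    exact ((hasDerivAt_comp_add_smul hd x v t).sub
      (by simpa using (hasDerivAt_id t).mul_const ⟪∇ f x, v⟫)).sub hquad
  have hanti : AntitoneOn g (Set.Icc 0 1) := by
    refine antitoneOn_of_deriv_nonpos (convex_Icc 0 1)
      (fun t _ => (hg t).continuousAt.continuousWithinAt)
      (fun t _ => (hg t).differentiableAt.differentiableWithinAt) fun t ht => ?_
    rw [interior_Icc] at ht
    have hinner : ⟪∇ f (x + t • v) - ∇ f x, v⟫ ≤ L * t * ‖v‖ ^ 2 :=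
      calc ⟪∇ f (x + t • v) - ∇ f x, v⟫
          ≤ ‖∇ f (x + t • v) - ∇ f x‖ * ‖v‖ := real_inner_le_norm _ _
        _ ≤ L * ‖(x + t • v) - x‖ * ‖v‖ := by gcongr; exact hsm _ _
        _ = L * t * ‖v‖ ^ 2 := by
          rw [add_sub_cancel_left, norm_smul, Real.norm_of_nonneg ht.1.le]
          ring
    rw [(hg t).deriv]
    rw [inner_sub_left] at hinner
    linarith
  have h01 : g 1 ≤ g 0 := hanti (by norm_num) (by norm_num) zero_le_one
  simp only [g, v, bregmanDiv, one_smul, zero_smul, add_sub_cancel, add_zero] at h01 ⊢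
  linarith

theorem norm_gradient_sub_sq_le_bregmanDiv (hL : 0 < L) (hd : Differentiable ℝ f)
    (hcv : ∀ x y, 0 ≤ bregmanDiv f x y)
    (hsm : ∀ x y, ‖∇ f x - ∇ f y‖ ≤ L * ‖x - y‖) (x y : F) :
    ‖∇ f x - ∇ f y‖ ^ 2 ≤ 2 * L * bregmanDiv f x y := by
  set g := ∇ f x - ∇ f y
  -- Compare `y` with the point `z` reached from `x` by a `1/L` step along `g`.
  set z := x - L⁻¹ • g
  have hxz : x - z = L⁻¹ • g := sub_sub_cancel x _
  have hthree := inner_gradient_sub_gradient_eq_bregmanDiv f x z y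
  have hdesc := bregmanDiv_le_of_lipschitz_gradient hd hsm x z
  have hzy := hcv z y
  rw [hxz, real_inner_smul_right, real_inner_self_eq_norm_sq] at hthree
  rw [← norm_neg, neg_sub, hxz, norm_smul, Real.norm_of_nonneg (inv_pos.mpr hL).le, mul_pow]
    at hdesc
  have hgap : ‖g‖ ^ 2 / (2 * L) ≤ bregmanDiv f x y := by
    have : L / 2 * (L⁻¹ ^ 2 * ‖g‖ ^ 2) = L⁻¹ * ‖g‖ ^ 2 - ‖g‖ ^ 2 / (2 * L) := by
      field_simp
      ring
    linarith
  rwa [div_le_iff₀ (by positivity), mul_comm] at hgap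

variable {μ γ : ℝ}

theorem norm_gradient_step_sub_sq_le (hμ : 0 ≤ μ) (hL : 0 < L) (hγ : 0 ≤ γ) (hγL : γ ≤ 1 / L)
    (hd : Differentiable ℝ f) (hsc : ∀ x y, μ / 2 * ‖x - y‖ ^ 2 ≤ bregmanDiv f x y)
    (hsm : ∀ x y, ‖∇ f x - ∇ f y‖ ≤ L * ‖x - y‖) (a b c : F) :
    ‖(a - γ • ∇ f a) - (b - γ • ∇ f c)‖ ^ 2
      ≤ (1 - γ * μ) * ‖a - b‖ ^ 2 + 2 * γ * bregmanDiv f b c := by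
  have hcv : ∀ x y, 0 ≤ bregmanDiv f x y := fun x y =>
    (by positivity : 0 ≤ μ / 2 * ‖x - y‖ ^ 2).trans (hsc x y)
  have hcoco := norm_gradient_sub_sq_le_bregmanDiv hL hd hcv hsm a c
  have hstrong : μ / 2 * ‖a - b‖ ^ 2 ≤ bregmanDiv f b a := by
    simpa only [norm_sub_rev] using hsc b a
  have hγL' : γ * L ≤ 1 := (le_div_iff₀ hL).mp hγL
  have hexpand : ‖(a - γ • ∇ f a) - (b - γ • ∇ f c)‖ ^ 2
      = ‖a - b‖ ^ 2 - 2 * γ * ⟪∇ f a - ∇ f c, a - b⟫ + γ ^ 2 * ‖∇ f a - ∇ f c‖ ^ 2 := by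
    rw [show (a - γ • ∇ f a) - (b - γ • ∇ f c) = (a - b) - γ • (∇ f a - ∇ f c) by module,
      norm_sub_sq_real, real_inner_smul_right, norm_smul, Real.norm_of_nonneg hγ,
      real_inner_comm]
    ring
  rw [hexpand, inner_gradient_sub_gradient_eq_bregmanDiv]
  have hquad : γ ^ 2 * ‖∇ f a - ∇ f c‖ ^ 2 ≤ 2 * γ * bregmanDiv f a c :=
    calc γ ^ 2 * ‖∇ f a - ∇ f c‖ ^ 2 ≤ γ ^ 2 * (2 * L * bregmanDiv f a c) := by gcongr
      _ = 2 * γ * (γ * L) * bregmanDiv f a c := by ring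
      _ ≤ 2 * γ * 1 * bregmanDiv f a c := by gcongr; exact hcv a c
      _ = 2 * γ * bregmanDiv f a c := by ring
  nlinarith [mul_le_mul_of_nonneg_left hstrong hγ]

theorem sum_filter_val_lt_succ {M : Type*} [AddCommMonoid M] {n : ℕ} (g : Fin n → M)
    (i : Fin n) :
    ∑ j ∈ Finset.univ.filter (fun j : Fin n => (j : ℕ) < (i.succ : ℕ)), g j
      = g i + ∑ j ∈ Finset.univ.filter (fun j : Fin n => (j : ℕ) < (i.castSucc : ℕ)), g j := by
  have hset : Finset.univ.filter (fun j : Fin n => (j : ℕ) < (i.succ : ℕ))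
      = insert i (Finset.univ.filter (fun j : Fin n => (j : ℕ) < (i.castSucc : ℕ))) := by
    ext j
    simp only [Finset.mem_filter, Finset.mem_insert, Finset.mem_univ, true_and,
      Fin.val_succ, Fin.val_castSucc, Nat.lt_succ_iff_lt_or_eq, ← Fin.val_eq_val]
    tauto
  rw [hset, Finset.sum_insert (by simp)]

theorem per_step_contraction_strongly_convex_general
    (d n : ℕ) (μ L γ : ℝ) (hμ : 0 < μ) (hL : 0 < L) (hγ : 0 < γ) (hγL : γ ≤ 1 / L)
    (f : Fin n → EuclideanSpace ℝ (Fin d) → ℝ)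
    (hd : ∀ i, Differentiable ℝ (f i))
    (hsc : ∀ i x y, f i x + (inner ℝ (gradient (f i) x) (y - x) : ℝ)
        + μ / 2 * ‖y - x‖ ^ 2 ≤ f i y)
    (hsm : ∀ i x y, ‖gradient (f i) x - gradient (f i) y‖ ≤ L * ‖x - y‖)
    (π : Equiv.Perm (Fin n))
    (xstar : EuclideanSpace ℝ (Fin d))
    (x : Fin (n + 1) → EuclideanSpace ℝ (Fin d))
    (hx : ∀ i : Fin n, x i.succ = x i.castSucc - γ • gradient (f (π i)) (x i.castSucc))
    (xs : Fin (n + 1) → EuclideanSpace ℝ (Fin d))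
    (hxs : ∀ i : Fin (n + 1), xs i = xstar - γ •
        ∑ j ∈ Finset.univ.filter (fun j : Fin n => (j : ℕ) < (i : ℕ)),
          gradient (f (π j)) xstar)
    (i : Fin n) :
    ‖x i.succ - xs i.succ‖ ^ 2
      ≤ (1 - γ * μ) * ‖x i.castSucc - xs i.castSucc‖ ^ 2
        + 2 * γ * (f (π i) (xs i.castSucc) - f (π i) xstar
            - (inner ℝ (gradient (f (π i)) xstar) (xs i.castSucc - xstar) : ℝ)) := by
  have hshadow : xs i.succ = xs i.castSucc - γ • ∇ (f (π i)) xstar := by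
    rw [hxs, hxs, sum_filter_val_lt_succ]
    module
  have hsc' : ∀ u v, μ / 2 * ‖u - v‖ ^ 2 ≤ bregmanDiv (f (π i)) u v := fun u v => by
    have := hsc (π i) v u
    unfold bregmanDiv
    linarith
  rw [hx, hshadow]
  exact norm_gradient_step_sub_sq_le hμ.le hL hγ.le hγL (hd (π i)) hsc' (hsm (π i)) _ _ _

/-- Per-step contraction for RR/SO with strongly convex components (key step of
Theorem 1): `‖x^{i+1} - x_*^{i+1}‖² ≤ (1-γμ)‖x^i - x_*^i‖² + 2γ D_{f_{π_i}}(x_*^i, x_*)`. -/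
theorem per_step_contraction_strongly_convex
    (d n : ℕ) (μ L γ : ℝ) (hμ : 0 < μ) (hL : 0 < L) (hγ : 0 < γ) (hγL : γ ≤ 1 / L)
    (f : Fin n → EuclideanSpace ℝ (Fin d) → ℝ)
    (hd : ∀ i, Differentiable ℝ (f i))
    (hsc : ∀ i x y, f i x + (inner ℝ (gradient (f i) x) (y - x) : ℝ)
        + μ / 2 * ‖y - x‖ ^ 2 ≤ f i y)
    (hsm : ∀ i x y, ‖gradient (f i) x - gradient (f i) y‖ ≤ L * ‖x - y‖)
    (π : Equiv.Perm (Fin n))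
    (xstar : EuclideanSpace ℝ (Fin d))
    (hmin : ∀ y, (n : ℝ)⁻¹ * ∑ i, f i xstar ≤ (n : ℝ)⁻¹ * ∑ i, f i y)
    (x : Fin (n + 1) → EuclideanSpace ℝ (Fin d))
    (hx : ∀ i : Fin n, x i.succ = x i.castSucc - γ • gradient (f (π i)) (x i.castSucc))
    (xs : Fin (n + 1) → EuclideanSpace ℝ (Fin d))
    (hxs : ∀ i : Fin (n + 1), xs i = xstar - γ •
        ∑ j ∈ Finset.univ.filter (fun j : Fin n => (j : ℕ) < (i : ℕ)),
          gradient (f (π j)) xstar)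
    (i : Fin n) :
    ‖x i.succ - xs i.succ‖ ^ 2
      ≤ (1 - γ * μ) * ‖x i.castSucc - xs i.castSucc‖ ^ 2
        + 2 * γ * (f (π i) (xs i.castSucc) - f (π i) xstar
            - (inner ℝ (gradient (f (π i)) xstar) (xs i.castSucc - xstar) : ℝ)) :=
  per_step_contraction_strongly_convex_general d n μ L γ hμ hL hγ hγL f hd hsc hsm π xstar x hx xs
    hxs i
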